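/- arXiv:1610.04022 — 10 statements merged into one kernel-verified Lean document; each statement's English description precedes it below -/
import Mathlib

section
/- Let p(x) be a polynomial with non-negative integer coefficients such that p(0) = 1 and deg p ≥ 2. Then for all positive integers a and b, p(a) + p(b) ≤ p(a + b). -/
/-!
Every monomial `c x^i` with `i ≥ 1` is superadditive on `ℕ`, and strictly so when `i ≥ 2` and
`c ≠ 0`. Summing over the coefficients, `p(a) + p(b) < p(a + b) + p(0)` as soon as `p` has a
nonzero coefficient in some degree `≥ 2`; with `p(0) = 1` this is `p(a) + p(b) ≤ p(a + b)`.
-/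

open Polynomial Finset

/-- The `0 ^ n` term corrects the constant monomial; summed against the coefficients it gives
`p.eval 0`. -/
theorem pow_add_pow_le_add_pow_add_zero_pow {R : Type*} [Semiring R] [PartialOrder R]
    [IsOrderedRing R] {a b : R} (ha : 0 ≤ a) (hb : 0 ≤ b) (n : ℕ) :
    a ^ n + b ^ n ≤ (a + b) ^ n + 0 ^ n := by
  rcases n with _ | n
  · simp
  · rw [zero_pow n.succ_ne_zero, add_zero]
    exact pow_add_pow_le ha hb n.succ_ne_zero

theorem pow_add_pow_lt {R : Type*} [CommSemiring R] [PartialOrder R] [IsStrictOrderedRing R]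
    {a b : R} (ha : 0 < a) (hb : 0 < b) {n : ℕ} (hn : 2 ≤ n) :
    a ^ n + b ^ n < (a + b) ^ n := by
  obtain ⟨k, rfl⟩ := Nat.exists_eq_add_of_le' hn
  calc a ^ (k + 2) + b ^ (k + 2)
      < a ^ (k + 2) + b ^ (k + 2) + (a ^ (k + 1) * b + b ^ (k + 1) * a) :=
        lt_add_of_pos_right _ (by positivity)
    _ = (a ^ (k + 1) + b ^ (k + 1)) * (a + b) := by ring
    _ ≤ (a + b) ^ (k + 1) * (a + b) := by
        gcongr
        exact pow_add_pow_le ha.le hb.le k.succ_ne_zero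
    _ = (a + b) ^ (k + 2) := (pow_succ _ _).symm

theorem Polynomial.eval_add_eval_lt_eval_add_add_coeff_zero {p : ℕ[X]} {n : ℕ} (hn : 2 ≤ n)
    (hpn : p.coeff n ≠ 0) {a b : ℕ} (ha : 0 < a) (hb : 0 < b) :
    p.eval a + p.eval b < p.eval (a + b) + p.coeff 0 := by
  have hN : p.natDegree < p.natDegree + 1 := Nat.lt_succ_self _
  have hnN : n ∈ range (p.natDegree + 1) := mem_range_succ_iff.mpr (le_natDegree_of_ne_zero hpn)
  simp only [coeff_zero_eq_eval_zero, eval_eq_sum_range' hN, ← sum_add_distrib]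
  refine sum_lt_sum (fun i _ => ?_) ⟨n, hnN, ?_⟩
  · rw [← mul_add, ← mul_add]
    exact Nat.mul_le_mul_left _ (pow_add_pow_le_add_pow_add_zero_pow a.zero_le b.zero_le i)
  · rw [← mul_add, ← mul_add, zero_pow (by omega), add_zero]
    exact Nat.mul_lt_mul_of_pos_left (pow_add_pow_lt ha hb hn) (Nat.pos_of_ne_zero hpn)

theorem stmt_0 (p : Polynomial ℕ) (h0 : p.coeff 0 = 1) (hdeg : 2 ≤ p.natDegree)
    (a b : ℕ) (ha : 0 < a) (hb : 0 < b) :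
    p.eval a + p.eval b ≤ p.eval (a + b) := by
  have hlead : p.coeff p.natDegree ≠ 0 :=
    leadingCoeff_ne_zero.mpr (ne_zero_of_natDegree_gt hdeg)
  have := eval_add_eval_lt_eval_add_add_coeff_zero hdeg hlead ha hb
  omega
end

section
/- Let p(x) be a polynomial with non-negative integer coefficients such that p(0) = 1 and deg p ≥ 2. Then for every n ≥ 1 and every tuple (a_1, ..., a_n) of positive integers with a_1 + ... + a_n = S, we have p(a_1) + ... + p(a_n) ≤ p(S). -/
/-!
Every monomial `c x^k` with `k ≥ 1` is superadditive on `ℕ`, and the leading one, of degree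
`d ≥ 2`, beats superadditivity by `(a + b)^d - a^d - b^d ≥ 2ab ≥ 2` when `a, b ≥ 1`. This surplus
pays for the constant term, which `p(a) + p(b)` counts twice and `p(a + b)` only once, so `p` is
superadditive on positive integers as soon as `p(0) ≤ 2`; induction on the number of summands
finishes the proof.
-/

open Polynomial Finset

theorem pow_add_pow_add_two_le {a b d : ℕ} (ha : 1 ≤ a) (hb : 1 ≤ b) (hd : 2 ≤ d) :
    a ^ d + b ^ d + 2 ≤ (a + b) ^ d := by
  obtain ⟨e, rfl⟩ : ∃ e, d = e + 2 := ⟨d - 2, by omega⟩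
  have hae : a ^ e ≤ (a + b) ^ e := Nat.pow_le_pow_left (by omega) e
  have hbe : b ^ e ≤ (a + b) ^ e := Nat.pow_le_pow_left (by omega) e
  have hone : 1 ≤ (a + b) ^ e := Nat.one_le_pow _ _ (by omega)
  have hab : 1 ≤ a * b := Nat.one_le_iff_ne_zero.mpr (by positivity)
  calc a ^ (e + 2) + b ^ (e + 2) + 2
      ≤ (a + b) ^ e * a ^ 2 + (a + b) ^ e * b ^ 2 + (a + b) ^ e * (2 * (a * b)) := by
        rw [pow_add, pow_add]
        exact add_le_add_three (Nat.mul_le_mul_right _ hae) (Nat.mul_le_mul_right _ hbe)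
          (le_mul_of_one_le_of_le hone (by omega))
    _ = (a + b) ^ (e + 2) := by ring

theorem Polynomial.eval_add_eval_add_two_le {p : ℕ[X]} (hp : 2 ≤ p.natDegree) {a b : ℕ}
    (ha : 1 ≤ a) (hb : 1 ≤ b) :
    p.eval a + p.eval b + 2 ≤ p.eval (a + b) + p.coeff 0 := by
  obtain ⟨e, he⟩ : ∃ e, p.natDegree = e + 2 := ⟨p.natDegree - 2, by omega⟩
  have hlead : 1 ≤ p.coeff (e + 2) := by
    rw [← he, Nat.one_le_iff_ne_zero, coeff_natDegree, leadingCoeff_ne_zero]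
    rintro rfl
    simp at hp
  have hsplit : ∀ x : ℕ, p.eval x = p.coeff 0
      + ∑ k ∈ range (e + 1), p.coeff (k + 1) * x ^ (k + 1) + p.coeff (e + 2) * x ^ (e + 2) := by
    intro x
    rw [eval_eq_sum_range, he, sum_range_succ, sum_range_succ']
    simp [add_comm]
  have hmid : ∑ k ∈ range (e + 1), p.coeff (k + 1) * a ^ (k + 1)
      + ∑ k ∈ range (e + 1), p.coeff (k + 1) * b ^ (k + 1)
      ≤ ∑ k ∈ range (e + 1), p.coeff (k + 1) * (a + b) ^ (k + 1) := by
    rw [← sum_add_distrib]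
    gcongr with k
    rw [← mul_add]
    exact Nat.mul_le_mul_left _ (pow_add_pow_le (by omega) (by omega) k.succ_ne_zero)
  have htop : p.coeff (e + 2) * a ^ (e + 2) + p.coeff (e + 2) * b ^ (e + 2) + 2
      ≤ p.coeff (e + 2) * (a + b) ^ (e + 2) :=
    calc _ ≤ p.coeff (e + 2) * (a ^ (e + 2) + b ^ (e + 2) + 2) := by nlinarith
      _ ≤ _ := Nat.mul_le_mul_left _ (pow_add_pow_add_two_le ha hb (by omega))
  rw [hsplit a, hsplit b, hsplit (a + b)]
  omega

theorem Polynomial.eval_add_eval_le_eval_add {p : ℕ[X]} (hp : 2 ≤ p.natDegree)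
    (h0 : p.coeff 0 ≤ 2) {a b : ℕ} (ha : 1 ≤ a) (hb : 1 ≤ b) :
    p.eval a + p.eval b ≤ p.eval (a + b) := by
  have := p.eval_add_eval_add_two_le hp ha hb
  omega

theorem Finset.sum_le_nonempty_of_superadditive_on_pred {ι M N : Type*} [AddCommMonoid M]
    [AddCommMonoid N] [PartialOrder N] [IsOrderedAddMonoid N] (f : M → N) (p : M → Prop)
    (h_add : ∀ x y, p x → p y → f x + f y ≤ f (x + y)) (hp_add : ∀ x y, p x → p y → p (x + y))
    (g : ι → M) (s : Finset ι) (hs_nonempty : s.Nonempty) (hs : ∀ i ∈ s, p (g i)) :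
    ∑ i ∈ s, f (g i) ≤ f (∑ i ∈ s, g i) :=
  le_sum_nonempty_of_subadditive_on_pred (N := Nᵒᵈ) f p h_add hp_add g s hs_nonempty hs

theorem stmt_1 (p : Polynomial ℕ) (h0 : p.coeff 0 = 1) (hdeg : 2 ≤ p.natDegree)
    (n : ℕ) (hn : 1 ≤ n) (a : Fin n → ℕ) (ha : ∀ i, 0 < a i) (S : ℕ)
    (hS : ∑ i, a i = S) :
    ∑ i, p.eval (a i) ≤ p.eval S := by
  subst hS
  exact sum_le_nonempty_of_superadditive_on_pred p.eval (0 < ·)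
    (fun _ _ hx hy => p.eval_add_eval_le_eval_add hdeg (by omega) hx hy)
    (fun _ _ hx _ => Nat.add_pos_left hx _) a univ
    (univ_nonempty_iff.mpr (Fin.pos_iff_nonempty.mp hn)) (fun i _ => ha i)
end

section
/- Let k be a field of characteristic 0 with algebraic closure k̄, A a k-algebra, and I an ideal of A. Then the extension of the radical of I to k̄ ⊗_k A equals the radical of the extension of I to k̄ ⊗_k A, i.e., k̄ ⊗_k √I = √(k̄ ⊗_k I). -/
/-!
Put `J = √I`. By right exactness of `k̄ ⊗_k -`, the kernel of `k̄ ⊗ A → k̄ ⊗ (A/J)` is `k̄ ⊗ J`,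
so `k̄ ⊗ J` is a radical ideal as soon as `k̄ ⊗ (A/J)` is reduced; it then contains
`√(k̄ ⊗ I)`. Reducedness of `K ⊗_k B` for `B` reduced and `K/k` separable reduces to finite
subextensions `L = k(α) ≅ k[X]/(f)` with `f` separable, where `B ⊗ L ≅ B[X]/(f)`. There a
remainder modulo `f` whose power is divisible by `f` vanishes in `κ(p)[X]` for every prime `p`
of `B`, since `f` stays squarefree over the residue field `κ(p)`; so its coefficients are
nilpotent, hence zero.
-/

open Polynomial TensorProduct

theorem Polynomial.Separable.isRadical_map {k R : Type*} [Field k] [CommRing R] [IsReduced R]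
    [Algebra k R] {f : k[X]} (hmonic : f.Monic) (hsep : f.Separable) :
    IsRadical (f.map (algebraMap k R)) := by
  intro n g hdvd
  have hmonicR := hmonic.map (algebraMap k R)
  rw [← modByMonic_eq_zero_iff_dvd hmonicR]
  ext i
  suffices ∀ p : Ideal R, p.IsPrime → (g %ₘ f.map (algebraMap k R)).coeff i ∈ p by
    have hnil : (g %ₘ f.map (algebraMap k R)).coeff i ∈ nilradical R := by
      rw [nilradical_eq_sInf, Ideal.mem_sInf]
      exact fun p hp ↦ this p hp
    simpa [nilradical_eq_zero] using hnil
  intro p _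
  set φ := algebraMap R p.ResidueField
  have hsqf : Squarefree (f.map (φ.comp (algebraMap k R))) := hsep.map.squarefree
  have hvanish : (g %ₘ f.map (algebraMap k R)).map φ = 0 := by
    rw [map_modByMonic φ hmonicR, modByMonic_eq_zero_iff_dvd (hmonicR.map φ), map_map]
    refine hsqf.isRadical n _ ?_
    rw [← Polynomial.map_pow, ← map_map]
    exact Polynomial.map_dvd φ hdvd
  rw [← Ideal.ker_algebraMap_residueField p, RingHom.mem_ker, ← coeff_map, hvanish, coeff_zero]

theorem AdjoinRoot.isReduced_of_separable {k R : Type*} [Field k] [CommRing R] [IsReduced R]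
    [Algebra k R] {f : k[X]} (hmonic : f.Monic) (hsep : f.Separable) :
    IsReduced (AdjoinRoot (f.map (algebraMap k R))) :=
  (Ideal.isRadical_iff_quotient_reduced _).mp
    (isRadical_iff_span_singleton.mp (hsep.isRadical_map hmonic))

theorem IsReduced.tensorProduct_of_finiteDimensional_of_isSeparable {k L B : Type*} [Field k]
    [Field L] [Algebra k L] [FiniteDimensional k L] [Algebra.IsSeparable k L] [CommRing B]
    [Algebra k B] [IsReduced B] : IsReduced (B ⊗[k] L) := by
  let pb := Field.powerBasisOfFiniteOfSeparable k L
  set f := minpoly k pb.gen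
  have : IsReduced (B ⊗[k] k) :=
    isReduced_of_injective _ (Algebra.TensorProduct.rid k k B).injective
  have := AdjoinRoot.isReduced_of_separable (R := B ⊗[k] k) (minpoly.monic pb.isIntegral_gen)
    (Algebra.IsSeparable.isSeparable k pb.gen)
  let e : AdjoinRoot f ≃ₐ[k] L :=
    (IsAdjoinRoot.mkOfAdjoinEqTop pb.isIntegral_gen pb.adjoin_gen_eq_top).adjoinRootAlgEquiv
  let e' : B ⊗[k] L ≃ₐ[B] AdjoinRoot (f.map (algebraMap k (B ⊗[k] k))) :=
    (Algebra.TensorProduct.congr AlgEquiv.refl e.symm).trans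
      (AdjoinRoot.tensorAlgEquiv f _
        (congrArg (Polynomial.map · f) (RingHom.ext Algebra.TensorProduct.includeRight.commutes)))
  exact isReduced_of_injective _ e'.injective

theorem IsReduced.tensorProduct_of_isSeparable (k K B : Type*) [Field k] [Field K]
    [Algebra k K] [Algebra.IsSeparable k K] [CommRing B] [Algebra k B] [IsReduced B] :
    IsReduced (K ⊗[k] B) := by
  suffices IsReduced (B ⊗[k] K) from
    isReduced_of_injective _ (Algebra.TensorProduct.comm k K B).injective
  refine IsReduced.tensorProduct_of_flat_of_forall_fg fun S ⟨t, ht⟩ ↦ ?_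
  let L := IntermediateField.adjoin k (t : Set K)
  have : FiniteDimensional k L := IntermediateField.finiteDimensional_adjoin
    fun x _ ↦ (Algebra.IsSeparable.isSeparable k x).isIntegral
  have hSL : S ≤ L.toSubalgebra := ht ▸ IntermediateField.algebra_adjoin_le_adjoin k _
  have : IsReduced (B ⊗[k] L) := tensorProduct_of_finiteDimensional_of_isSeparable
  exact isReduced_of_injective
    (Algebra.TensorProduct.map (AlgHom.id k B) (Subalgebra.inclusion hSL))
    (Module.Flat.lTensor_preserves_injective_linearMap _ (Subalgebra.inclusion_injective hSL))

theorem Ideal.isRadical_map_includeRight {R C A : Type*} [CommRing R] [CommRing C] [CommRing A]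
    [Algebra R C] [Algebra R A] (J : Ideal A) [IsReduced (C ⊗[R] (A ⧸ J))] :
    (J.map (Algebra.TensorProduct.includeRight : A →ₐ[R] C ⊗[R] A)).IsRadical := by
  have hsurj := Ideal.Quotient.mkₐ_surjective R J
  have hker := Algebra.TensorProduct.lTensor_ker (A := C) _ hsurj
  rw [show RingHom.ker (Ideal.Quotient.mkₐ R J) = J from Ideal.mk_ker] at hker
  rw [← hker]
  exact (RingHom.ker_isRadical_iff_reduced_of_surjective
    (Algebra.TensorProduct.map_surjective (AlgHom.id R C) _ Function.surjective_id hsurj)).mpr ‹_›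

theorem Ideal.map_radical_includeRight {R C A : Type*} [CommRing R] [CommRing C] [CommRing A]
    [Algebra R C] [Algebra R A] (I : Ideal A) [IsReduced (C ⊗[R] (A ⧸ I.radical))] :
    I.radical.map (Algebra.TensorProduct.includeRight : A →ₐ[R] C ⊗[R] A) =
      (I.map (Algebra.TensorProduct.includeRight : A →ₐ[R] C ⊗[R] A)).radical :=
  le_antisymm (Ideal.map_radical_le _) <|
    (I.radical.isRadical_map_includeRight (R := R) (C := C)).radical ▸
      Ideal.radical_mono (Ideal.map_mono Ideal.le_radical)

theorem stmt_3 (k : Type*) [Field k] [CharZero k] {A : Type*} [CommRing A] [Algebra k A]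
    (I : Ideal A) :
    I.radical.map
        (Algebra.TensorProduct.includeRight :
          A →ₐ[k] TensorProduct k (AlgebraicClosure k) A).toRingHom =
      (I.map (Algebra.TensorProduct.includeRight :
          A →ₐ[k] TensorProduct k (AlgebraicClosure k) A).toRingHom).radical := by
  have : IsReduced (A ⧸ I.radical) :=
    (Ideal.isRadical_iff_quotient_reduced _).mp I.radical_isRadical
  have := IsReduced.tensorProduct_of_isSeparable k (AlgebraicClosure k) (A ⧸ I.radical)
  exact I.map_radical_includeRight
end

section
/- Let R be a commutative differential ring with derivation D, and let I be a differential ideal of R. Then the radical √I is also a differential ideal of R, provided R is a ℚ-algebra. -/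
/-!
If `a ^ n ∈ I`, then by induction on `k` we get `a ^ (n - k) * (D a) ^ (2 * k) ∈ I` for `k ≤ n`:
differentiating `a ^ (m + 1) * (D a) ^ (2 * k)` and multiplying by `D a` gives
`(m + 1) * a ^ m * (D a) ^ (2 * k + 2)` plus a multiple of the original element, and
`m + 1` is invertible in a `ℚ`-algebra. At `k = n` this says `(D a) ^ (2 * n) ∈ I`.
-/

theorem Ideal.mem_of_natCast_mul_mem {R : Type*} [CommRing R] [Algebra ℚ R] {I : Ideal R}
    {n : ℕ} (hn : n ≠ 0) {x : R} (h : (n : R) * x ∈ I) : x ∈ I := by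
  have hunit : IsUnit (n : R) := by
    simpa using (isUnit_iff_ne_zero.mpr (Nat.cast_ne_zero.mpr hn : (n : ℚ) ≠ 0)).map
      (algebraMap ℚ R)
  exact (I.unit_mul_mem_iff_mem hunit).mp h

namespace Derivation

variable {A R : Type*} [CommRing A] [CommRing R] [Algebra A R]

theorem mul_leibniz_pow (D : Derivation A R R) (b : R) (j : ℕ) : b * D (b ^ j) = j * (b ^ j * D b) := by
  cases j with
  | zero => simp
  | succ j =>
    rw [leibniz_pow, Nat.add_sub_cancel, smul_eq_mul, nsmul_eq_mul, pow_succ]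
    ring

theorem mul_leibniz_pow_mul_pow (D : Derivation A R R) (a : R) (m k : ℕ) :
    D a * D (a ^ (m + 1) * D a ^ k) =
      (m + 1 : ℕ) * (a ^ m * D a ^ (k + 2)) + k * D (D a) * (a ^ (m + 1) * D a ^ k) := by
  rw [leibniz, smul_eq_mul, smul_eq_mul, mul_add, ← mul_assoc, mul_comm (D a) (a ^ (m + 1)),
    mul_assoc, mul_leibniz_pow, leibniz_pow, Nat.add_sub_cancel]
  simp only [smul_eq_mul, nsmul_eq_mul]
  ring

theorem pow_mul_apply_pow_mem_of_pow_add_mem [Algebra ℚ R] {D : Derivation A R R} {I : Ideal R}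
    (hI : ∀ x ∈ I, D x ∈ I) {a : R} (k : ℕ) :
    ∀ m, a ^ (m + k) ∈ I → a ^ m * D a ^ (2 * k) ∈ I := by
  induction k with
  | zero => simp
  | succ k ih =>
    intro m ha
    have hprev : a ^ (m + 1) * D a ^ (2 * k) ∈ I := ih (m + 1) (by rwa [add_right_comm])
    have hsum := I.mul_mem_left (D a) (hI _ hprev)
    rw [mul_leibniz_pow_mul_pow] at hsum
    have hmain := I.sub_mem hsum (I.mul_mem_left ((2 * k : ℕ) * D (D a)) hprev)
    rw [add_sub_cancel_right] at hmain
    exact I.mem_of_natCast_mul_mem m.add_one_ne_zero hmain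

end Derivation

theorem stmt_5 {R : Type*} [CommRing R] [Algebra ℚ R] (D : Derivation ℚ R R)
    (I : Ideal R) (hI : ∀ a ∈ I, D a ∈ I) :
    ∀ a ∈ I.radical, D a ∈ I.radical := by
  rintro a ⟨n, ha⟩
  exact ⟨2 * n, by simpa using D.pow_mul_apply_pow_mem_of_pow_add_mem hI n 0 (by simpa using ha)⟩
end

section
/- Let R be a commutative differential ring with derivation D and a an element of R. If a^n belongs to a differential ideal I for some n, then a·D(a) raised to a suitable power lies in I; specifically, a^n ∈ I implies (D(a))^{2n-1}·a ∈ I when R is a ℚ-algebra. -/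
/-! Write `a' = D a`. Multiplying the derivative of `a'^j a^(m+1)` by `a'` gives
`j a'^j (D a') a^(m+1) + (m+1) a'^(j+2) a^m`; the first summand is a multiple of the original
element, so in a ℚ-algebra membership in a differential ideal passes from `a'^j a^(m+1)` to
`a'^(j+2) a^m`. Starting from `a^n` and repeating this `n-1` times trades all but one factor `a`
for `a'^(2n-2)`. -/

section

variable {A R : Type*} [CommRing A] [CommRing R] [Algebra A R] (D : Derivation A R R)

lemma Derivation.deriv_mul_deriv_pow_mul_pow (a : R) (j m : ℕ) :
    D a * D (D a ^ j * a ^ (m + 1)) =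
      j * D (D a) * (D a ^ j * a ^ (m + 1)) + (m + 1) * (D a ^ (j + 2) * a ^ m) := by
  rw [D.leibniz, D.leibniz_pow, D.leibniz_pow]
  cases j <;> simp only [smul_eq_mul, nsmul_eq_mul] <;> push_cast <;> ring

variable [Algebra ℚ R] {I : Ideal R}

lemma Ideal.mem_of_natCast_add_one_mul_mem {x : R} (m : ℕ) (h : ((m : R) + 1) * x ∈ I) :
    x ∈ I := by
  have hu : IsUnit ((m : R) + 1) := by
    simpa using (Nat.cast_add_one_ne_zero (R := ℚ) m).isUnit.map (algebraMap ℚ R)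
  exact (I.unit_mul_mem_iff_mem hu).mp h

lemma Derivation.deriv_pow_add_two_mul_pow_mem (hI : ∀ x ∈ I, D x ∈ I) {a : R} {j m : ℕ}
    (h : D a ^ j * a ^ (m + 1) ∈ I) : D a ^ (j + 2) * a ^ m ∈ I := by
  refine I.mem_of_natCast_add_one_mul_mem m ?_
  rw [eq_sub_of_add_eq' (D.deriv_mul_deriv_pow_mul_pow a j m).symm]
  exact I.sub_mem (I.mul_mem_left _ (hI _ h)) (I.mul_mem_left _ h)

lemma Derivation.deriv_pow_two_mul_mul_pow_mem (hI : ∀ x ∈ I, D x ∈ I) {a : R} {k m : ℕ}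
    (h : a ^ (m + k) ∈ I) : D a ^ (2 * k) * a ^ m ∈ I := by
  induction k generalizing m with
  | zero => simpa using h
  | succ k ih =>
    have hk : D a ^ (2 * k) * a ^ (m + 1) ∈ I := ih (by rwa [add_right_comm])
    simpa [mul_add] using D.deriv_pow_add_two_mul_pow_mem hI hk

end

theorem stmt_6_general {R : Type*} [CommRing R] [Algebra ℚ R] (D : Derivation ℚ R R)
    (I : Ideal R) (hI : ∀ a ∈ I, D a ∈ I) (a : R) (n : ℕ)
    (ha : a ^ n ∈ I) :
    (D a) ^ (2 * n - 1) * a ∈ I := by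
  cases n with
  | zero => simp [I.eq_top_of_isUnit_mem ha (by simp)]
  | succ p =>
    have h : D a ^ (2 * p) * a ^ 1 ∈ I := D.deriv_pow_two_mul_mul_pow_mem hI (by rwa [add_comm])
    have hexp : 2 * (p + 1) - 1 = 2 * p + 1 := by omega
    rw [hexp, pow_succ, mul_right_comm]
    simpa using I.mul_mem_right (D a) h

theorem stmt_6 {R : Type*} [CommRing R] [Algebra ℚ R] (D : Derivation ℚ R R)
    (I : Ideal R) (hI : ∀ a ∈ I, D a ∈ I) (a : R) (n : ℕ) (hn : 0 < n)
    (ha : a ^ n ∈ I) :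
    (D a) ^ (2 * n - 1) * a ∈ I :=
  stmt_6_general D I hI a n ha
end

section
/- Let g_1, ..., g_m be differential polynomials over ℂ in variables x_1, ..., x_n (with derivation sending x_i^{(j)} to x_i^{(j+1)}), N a positive integer, and f_1, ..., f_n formal power series in ℂ[[t]]. If for every i the power series g_i(f_1, ..., f_n) (obtained by substituting x_j^{(l)} ↦ f_j^{(l)}) has t-adic valuation at least N, then 1 does not lie in the ideal generated by all derivatives up to order N-1 of g_1, ..., g_m. -/
/-! The substitution `x_i^{(j)} ↦ f_i^{(j)}` intertwines the formal derivation of `ℂ[x_∞]` with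
`d/dt`, so the generator `g_i^{(j)}` is sent to `(g_i(f))^{(j)}`, whose constant term is
`j! · [t^j] g_i(f) = 0` for `j < N`. Hence all generators lie in the kernel of the ring
homomorphism `p ↦ p(f)(0)`, a proper ideal. -/

namespace MvPolynomial

variable {R σ ι A : Type*} [CommSemiring R] [CommSemiring A] [Algebra R A]

theorem algHom_comp_mkDerivation (φ : MvPolynomial σ R →ₐ[R] A) (v : σ → MvPolynomial σ R)
    (d : Derivation R A A) (h : ∀ s, φ (v s) = d (φ (X s))) :
    φ.toLinearMap ∘ₗ (mkDerivation R v).toLinearMap = d.toLinearMap ∘ₗ φ.toLinearMap := by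
  refine LinearMap.ext fun p => ?_
  induction p using MvPolynomial.induction_on with
  | C a => simp
  | add p q hp hq => simp only [LinearMap.comp_apply, map_add, hp, hq]
  | mul_X p s hp =>
    simp only [LinearMap.coe_comp, Function.comp_apply, AlgHom.toLinearMap_apply,
      Derivation.coeFn_coe] at hp ⊢
    rw [Derivation.leibniz, map_mul, Derivation.leibniz, mkDerivation_X]
    simp only [smul_eq_mul, map_add, map_mul, hp, h]

theorem aeval_pow_mkDerivation_shift (d : Derivation R A A) (x : ι → A) (j : ℕ)
    (q : MvPolynomial (ι × ℕ) R) :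
    aeval (fun p : ι × ℕ => (d.toLinearMap ^ p.2) (x p.1))
        (((mkDerivation R fun p : ι × ℕ => (X (p.1, p.2 + 1) : MvPolynomial (ι × ℕ) R)).toLinearMap ^
          j) q) =
      (d.toLinearMap ^ j) (aeval (fun p : ι × ℕ => (d.toLinearMap ^ p.2) (x p.1)) q) := by
  have hshift := algHom_comp_mkDerivation
    (aeval (R := R) fun p : ι × ℕ => (d.toLinearMap ^ p.2) (x p.1)) (fun p => X (p.1, p.2 + 1)) d
    fun p => by simp only [aeval_X, pow_succ', Module.End.mul_apply, Derivation.coeFn_coe]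
  exact (LinearMap.congr_fun (Module.End.commute_pow_left_of_commute hshift.symm j) q).symm

end MvPolynomial

open PowerSeries MvPolynomial

theorem stmt_7 (n m N : ℕ) (hN : 0 < N) (g : Fin m → MvPolynomial (Fin n × ℕ) ℂ)
    (f : Fin n → PowerSeries ℂ)
    -- D : the derivation on ℂ[x_∞] sending x_i^{(j)} to x_i^{(j+1)}
    (D : Derivation ℂ (MvPolynomial (Fin n × ℕ) ℂ) (MvPolynomial (Fin n × ℕ) ℂ))
    (hD : D = MvPolynomial.mkDerivation ℂ (fun p : Fin n × ℕ => X (p.1, p.2 + 1)))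
    -- φ : the substitution x_i^{(j)} ↦ (d/dt)^j (f i)
    (φ : MvPolynomial (Fin n × ℕ) ℂ →ₐ[ℂ] PowerSeries ℂ)
    (hφ : φ = MvPolynomial.aeval
      (fun p : Fin n × ℕ => ((PowerSeries.derivative ℂ).toLinearMap ^ p.2) (f p.1)))
    -- each g i vanishes to order at least N after substitution
    (hval : ∀ i : Fin m, ∀ l < N, PowerSeries.coeff l (φ (g i)) = 0) :
    (1 : MvPolynomial (Fin n × ℕ) ℂ) ∉
      Ideal.span {h | ∃ (i : Fin m) (j : ℕ), j ≤ N - 1 ∧ h = (D.toLinearMap ^ j) (g i)} := by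
  subst hD
  intro hmem
  refine RingHom.ker_ne_top (PowerSeries.constantCoeff.comp φ.toRingHom)
    ((Ideal.eq_top_iff_one _).2 (Ideal.span_le.2 ?_ hmem))
  rintro _ ⟨i, j, hj, rfl⟩
  subst hφ
  change PowerSeries.constantCoeff (MvPolynomial.aeval _ _) = 0
  rw [aeval_pow_mkDerivation_shift, Module.End.pow_apply, Derivation.coeFn_coe, constantCoeff_iterate_derivative,
     hval i j (by omega), mul_zero]
end

section
/- Let d be a positive integer and B = (d+2 choose 2) − 1 = d(d+3)/2. If P(x, y) ∈ ℂ[x, y] is a polynomial of degree at most d such that the analytic function P(t, e^t) vanishes to order at least B + 1 at t = 0, then P(t, e^t) is identically zero. -/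
/-!
Write `P(t, e^t) = ∑_{j ≤ d} q_j(t) e^{jt}` with `deg q_j ≤ d - j`: these are
`∑ (d - j + 1) = B + 1` unknown coefficients. On `q(t) e^{jt}` the operator `D - m` acts as
`(D + j - m) q · e^{jt}`, which is injective on polynomials for `j ≠ m` and nilpotent for `j = m`.
So `(D - m)^{deg q_m + 1}` kills the top term while lowering the order of vanishing at `0` by only
`deg q_m + 1`, and induction on the number of terms shows that a nonzero sum
`∑_j q_j(t) e^{jt}` vanishes to order less than `∑_j (deg q_j + 1)`.
-/

open PowerSeries

open scoped Polynomial

open Finset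

theorem Finset.sum_range_tsub_add_one (n : ℕ) :
    ∑ j ∈ range (n + 1), (n - j + 1) = (n + 2).choose 2 := by
  have h := sum_range_reflect (fun j => j + 1) (n + 1)
  simp only [add_tsub_cancel_right] at h
  rw [h, Nat.choose_two_right, ← sum_range_id, sum_range_succ' _ (n + 1), add_zero]

namespace Polynomial

variable {R : Type*} [CommRing R]

noncomputable def shiftedDerivative (c : R) : Module.End R R[X] := derivative - c • 1

theorem shiftedDerivative_apply (c : R) (q : R[X]) :
    shiftedDerivative c q = derivative q - c • q := rfl

theorem natDegree_shiftedDerivative_le (c : R) (q : R[X]) :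
    (shiftedDerivative c q).natDegree ≤ q.natDegree :=
  (natDegree_sub_le _ _).trans <|
    max_le ((natDegree_derivative_le q).trans tsub_le_self) (natDegree_smul_le c q)

theorem natDegree_shiftedDerivative_pow_le (c : R) (k : ℕ) (q : R[X]) :
    ((shiftedDerivative c ^ k) q).natDegree ≤ q.natDegree := by
  induction k generalizing q with
  | zero => rfl
  | succ k ih => exact (ih _).trans (natDegree_shiftedDerivative_le c q)

theorem shiftedDerivative_injective [NoZeroDivisors R] {c : R} (hc : c ≠ 0) :
    Function.Injective (shiftedDerivative c) := by
  rw [injective_iff_map_eq_zero]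
  intro q hq
  by_contra hq0
  have htop := congrArg (coeff · q.natDegree) hq
  simp only [shiftedDerivative_apply, coeff_sub, coeff_derivative, coeff_smul, smul_eq_mul,
    coeff_natDegree_succ_eq_zero, zero_mul, zero_sub, coeff_zero, neg_eq_zero] at htop
  exact hq0 (leadingCoeff_eq_zero.mp ((mul_eq_zero.mp htop).resolve_left hc))

theorem shiftedDerivative_pow_injective [NoZeroDivisors R] {c : R} (hc : c ≠ 0) (k : ℕ) :
    Function.Injective (shiftedDerivative c ^ k) := by
  rw [Module.End.coe_pow]
  exact (shiftedDerivative_injective hc).iterate k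

theorem shiftedDerivative_zero_pow_apply {k : ℕ} {q : R[X]} (hq : q.natDegree < k) :
    (shiftedDerivative 0 ^ k) q = 0 := by
  simpa [shiftedDerivative, Module.End.coe_pow] using iterate_derivative_eq_zero hq

theorem eq_zero_of_X_pow_dvd_coe {n : ℕ} {q : R[X]} (hq : q.natDegree < n)
    (h : PowerSeries.X ^ n ∣ (q : R⟦X⟧)) : q = 0 := by
  ext i
  rw [coeff_zero]
  rcases lt_or_ge i n with hi | hi
  · rw [← coeff_coe]; exact PowerSeries.X_pow_dvd_iff.mp h i hi
  · exact coeff_eq_zero_of_natDegree_lt (hq.trans_le hi)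

theorem aeval_X_eq_coe (q : R[X]) : aeval (PowerSeries.X : R⟦X⟧) q = q := by
  rw [aeval_def]
  exact eval₂_C_X_eq_coe

end Polynomial

namespace PowerSeries

variable {R : Type*} [CommRing R]

noncomputable def shiftedDerivative (c : R) : Module.End R R⟦X⟧ := (d⁄dX R).toLinearMap - c • 1

theorem shiftedDerivative_apply (c : R) (f : R⟦X⟧) :
    shiftedDerivative c f = d⁄dX R f - c • f := rfl

theorem X_pow_dvd_shiftedDerivative {n : ℕ} {f : R⟦X⟧} (c : R) (h : X ^ (n + 1) ∣ f) :
    X ^ n ∣ shiftedDerivative c f := by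
  rw [X_pow_dvd_iff] at h ⊢
  intro l hl
  rw [shiftedDerivative_apply, map_sub, coeff_derivative, coeff_smul, h l (by omega),
    h (l + 1) (by omega), zero_mul, smul_zero, sub_zero]

theorem X_pow_dvd_shiftedDerivative_pow {n k : ℕ} {f : R⟦X⟧} (c : R) (h : X ^ (n + k) ∣ f) :
    X ^ n ∣ (shiftedDerivative c ^ k) f := by
  induction k generalizing n with
  | zero => exact h
  | succ k ih =>
    rw [pow_succ', Module.End.mul_apply]
    exact X_pow_dvd_shiftedDerivative c (ih (by rwa [← add_assoc, add_right_comm] at h))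

variable [Algebra ℚ R]

theorem derivative_exp_pow (j : ℕ) : d⁄dX R (exp R ^ j) = j • exp R ^ j := by
  cases j with
  | zero => simp
  | succ j => rw [Derivation.leibniz_pow, derivative_exp, smul_eq_mul, ← pow_succ,
      Nat.add_sub_cancel]

theorem shiftedDerivative_coe_mul_exp_pow (c : R) (j : ℕ) (q : R[X]) :
    shiftedDerivative c ((q : R⟦X⟧) * exp R ^ j) =
      (Polynomial.shiftedDerivative (c - j) q : R⟦X⟧) * exp R ^ j := by
  rw [shiftedDerivative_apply, Polynomial.shiftedDerivative_apply, Derivation.leibniz,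
    derivative_exp_pow, derivative_coe]
  simp only [Polynomial.coe_sub, Polynomial.coe_smul, smul_eq_C_mul, nsmul_eq_mul, map_sub,
    map_natCast]
  ring

theorem shiftedDerivative_pow_coe_mul_exp_pow (c : R) (j k : ℕ) (q : R[X]) :
    (shiftedDerivative c ^ k) ((q : R⟦X⟧) * exp R ^ j) =
      ((Polynomial.shiftedDerivative (c - j) ^ k) q : R⟦X⟧) * exp R ^ j := by
  induction k with
  | zero => rfl
  | succ k ih =>
    rw [pow_succ', Module.End.mul_apply, ih, shiftedDerivative_coe_mul_exp_pow, pow_succ',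
      Module.End.mul_apply]

theorem eq_zero_of_X_pow_dvd_sum_mul_exp_pow [IsDomain R] (e : ℕ → ℕ) {m : ℕ} {q : ℕ → R[X]}
    (hdeg : ∀ j < m, (q j).natDegree ≤ e j)
    (hdvd : X ^ (∑ j ∈ range m, (e j + 1)) ∣ ∑ j ∈ range m, (q j : R⟦X⟧) * exp R ^ j) :
    ∀ j < m, q j = 0 := by
  have := algebraRat.charZero R
  induction m generalizing q with
  | zero => simp
  | succ m ih =>
    set k := e m + 1
    have hkill : (shiftedDerivative (m : R) ^ k) (∑ j ∈ range (m + 1), (q j : R⟦X⟧) * exp R ^ j) =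
        ∑ j ∈ range m, ((Polynomial.shiftedDerivative ((m : R) - j) ^ k) (q j) : R⟦X⟧) *
          exp R ^ j := by
      rw [map_sum, sum_range_succ, shiftedDerivative_pow_coe_mul_exp_pow, sub_self,
        Polynomial.shiftedDerivative_zero_pow_apply (Nat.lt_succ_of_le (hdeg m m.lt_succ_self)),
        Polynomial.coe_zero, zero_mul, add_zero]
      exact sum_congr rfl fun j _ => shiftedDerivative_pow_coe_mul_exp_pow _ _ _ _
    have hkilled : ∀ j < m, (Polynomial.shiftedDerivative ((m : R) - j) ^ k) (q j) = 0 := by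
      refine ih (fun j hj => (Polynomial.natDegree_shiftedDerivative_pow_le _ k _).trans
        (hdeg j (by omega))) ?_
      rw [← hkill]
      refine X_pow_dvd_shiftedDerivative_pow _ ?_
      rwa [← sum_range_succ (fun j => e j + 1)]
    have hlow : ∀ j < m, q j = 0 := fun j hj =>
      Polynomial.shiftedDerivative_pow_injective (sub_ne_zero.mpr (by exact_mod_cast hj.ne')) k
        ((hkilled j hj).trans (map_zero _).symm)
    have htop : X ^ (∑ j ∈ range (m + 1), (e j + 1)) ∣ (q m : R⟦X⟧) := by
      have hsum : ∑ j ∈ range m, (q j : R⟦X⟧) * exp R ^ j = 0 := sum_eq_zero fun j hj => by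
        rw [hlow j (mem_range.mp hj), Polynomial.coe_zero, zero_mul]
      rw [sum_range_succ (fun j => (q j : R⟦X⟧) * exp R ^ j), hsum, zero_add] at hdvd
      exact ((isUnit_exp R).pow m).dvd_mul_right.mp hdvd
    intro j hj
    rcases Nat.lt_succ_iff_lt_or_eq.mp hj with hj | rfl
    · exact hlow j hj
    · refine Polynomial.eq_zero_of_X_pow_dvd_coe ?_ htop
      rw [sum_range_succ]
      have := hdeg j hj
      omega

end PowerSeries

namespace MvPolynomial

variable {R : Type*} [CommRing R]

/-- With `x = X 0` and `y = X 1`, `P = ∑_j (coeffY P j)(x) * y ^ j`. -/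
noncomputable def coeffY (P : MvPolynomial (Fin 2) R) (j : ℕ) : R[X] :=
  ∑ s ∈ P.support with s 1 = j, Polynomial.monomial (s 0) (P.coeff s)

theorem exponent_add_le_totalDegree {P : MvPolynomial (Fin 2) R} {s : Fin 2 →₀ ℕ}
    (hs : s ∈ P.support) : s 0 + s 1 ≤ P.totalDegree := by
  simpa [Finsupp.sum_fintype, Fin.sum_univ_two] using le_totalDegree hs

theorem natDegree_coeffY_le {d : ℕ} {P : MvPolynomial (Fin 2) R} (hP : P.totalDegree ≤ d)
    (j : ℕ) : (coeffY P j).natDegree ≤ d - j := by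
  refine Polynomial.natDegree_sum_le_of_forall_le _ _ fun s hs => ?_
  rw [mem_filter] at hs
  have := exponent_add_le_totalDegree hs.1
  exact (Polynomial.natDegree_monomial_le _).trans (by omega)

theorem aeval_eq_sum_coeffY {A : Type*} [CommRing A] [Algebra R A] {d : ℕ}
    {P : MvPolynomial (Fin 2) R} (hP : P.totalDegree ≤ d) (a b : A) :
    aeval ![a, b] P = ∑ j ∈ range (d + 1), Polynomial.aeval a (coeffY P j) * b ^ j := by
  have hmaps : ∀ s ∈ P.support, s 1 ∈ range (d + 1) := fun s hs =>
    mem_range.mpr (by have := exponent_add_le_totalDegree hs; omega)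
  rw [aeval_def, eval₂_eq', ← sum_fiberwise_of_maps_to hmaps]
  refine sum_congr rfl fun j _ => ?_
  rw [coeffY, map_sum, sum_mul]
  refine sum_congr rfl fun s hs => ?_
  rw [← (mem_filter.mp hs).2, Polynomial.aeval_monomial, Fin.prod_univ_two]
  simp [mul_assoc]

end MvPolynomial

open MvPolynomial PowerSeries

theorem stmt_8_general (d : ℕ) (B : ℕ) (hB : B = Nat.choose (d + 2) 2 - 1)
    (P : MvPolynomial (Fin 2) ℂ) (hdeg : P.totalDegree ≤ d)
    -- P(t, e^t) vanishes to order at least B + 1 at t = 0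
    (hvan : ∀ l ≤ B, PowerSeries.coeff l
      (MvPolynomial.aeval ![PowerSeries.X, PowerSeries.exp ℂ] P) = 0) :
    MvPolynomial.aeval ![PowerSeries.X, PowerSeries.exp ℂ] P = 0 := by
  have hcount : ∑ j ∈ range (d + 1), (d - j + 1) = B + 1 := by
    rw [sum_range_tsub_add_one, hB, Nat.sub_add_cancel (Nat.choose_pos (by omega))]
  simp only [aeval_eq_sum_coeffY hdeg, Polynomial.aeval_X_eq_coe] at hvan ⊢
  have hzero := eq_zero_of_X_pow_dvd_sum_mul_exp_pow (fun j => d - j)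
    (fun j _ => natDegree_coeffY_le hdeg j)
    (by rw [hcount, X_pow_dvd_iff]; exact fun l hl => hvan l (by omega))
  exact sum_eq_zero fun j hj => by rw [hzero j (mem_range.mp hj), Polynomial.coe_zero, zero_mul]

theorem stmt_8 (d : ℕ) (hd : 0 < d) (B : ℕ) (hB : B = Nat.choose (d + 2) 2 - 1)
    (P : MvPolynomial (Fin 2) ℂ) (hdeg : P.totalDegree ≤ d)
    -- P(t, e^t) vanishes to order at least B + 1 at t = 0
    (hvan : ∀ l ≤ B, PowerSeries.coeff l
      (MvPolynomial.aeval ![PowerSeries.X, PowerSeries.exp ℂ] P) = 0) :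
    MvPolynomial.aeval ![PowerSeries.X, PowerSeries.exp ℂ] P = 0 :=
  stmt_8_general d B hB P hdeg hvan
end

section
/- For every positive integer d there exist rational numbers μ_{i,j} for 0 ≤ i + j ≤ d such that the function Σ μ_{i,j} t^i e^{jt} equals t^B + O(t^{B+1}) as t → 0, where B = (d+2 choose 2) − 1. Equivalently, the truncations to degree B of the power series t^i e^{jt} for 0 ≤ i+j ≤ d form a basis of the ℚ-vector space of polynomials of degree at most B. -/
/-!
If `∑ pᵢ(t) e^{aᵢ t}`, with distinct `aᵢ` and `deg pᵢ < mᵢ`, vanishes to order `∑ mᵢ` at `0`,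
then all `pᵢ = 0`. Indeed `d/dt - a_{i₀}` maps it to `∑ qᵢ(t) e^{aᵢ t}` with
`qᵢ = pᵢ' + (aᵢ - a_{i₀}) pᵢ`, which lowers the degree bound of `p_{i₀}` by one and vanishes to
order one less; by induction all `qᵢ = 0`, which forces `pᵢ = 0` for `i ≠ i₀` and `p_{i₀}`
constant, hence zero as the sum vanishes at `0`. Degree bounds are phrased as nilpotency of
`d/dX`, which `d/dX - a_{i₀}` visibly respects.

Applied to `tⁱ e^{jt}`, `i + j ≤ d`, this says that the truncations to degree `B` are
`B + 1 = (d + 2).choose 2` linearly independent vectors in a space of dimension `B + 1`, so they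
span it; in particular they span `t^B`.
-/

open PowerSeries
open scoped Polynomial

variable {K : Type*} [Field K]

theorem Polynomial.iterate_derivative_eq_C_pow_mul {p : K[X]} {c : K}
    (h : Polynomial.derivative p = Polynomial.C c * p) (k : ℕ) :
    Polynomial.derivative^[k] p = Polynomial.C c ^ k * p := by
  induction k with
  | zero => simp
  | succ k ih =>
    rw [Function.iterate_succ_apply, h, Polynomial.iterate_derivative_C_mul, ih]
    ring

theorem Polynomial.eq_zero_of_derivative_eq_C_mul {p : K[X]} {c : K} (hc : c ≠ 0)
    (h : Polynomial.derivative p = Polynomial.C c * p) : p = 0 := by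
  have hpow := iterate_derivative_eq_C_pow_mul h (p.natDegree + 1)
  rw [Polynomial.iterate_derivative_eq_zero (Nat.lt_succ_self _), ← map_pow] at hpow
  exact (mul_eq_zero.mp hpow.symm).resolve_left (Polynomial.C_ne_zero.mpr (pow_ne_zero _ hc))

theorem Polynomial.iterate_derivative_derivative_add_C_mul_eq_zero {p : K[X]} {m : ℕ}
    (h : Polynomial.derivative^[m] p = 0) (c : K) :
    Polynomial.derivative^[m] (Polynomial.derivative p + Polynomial.C c * p) = 0 := by
  rw [iterate_map_add, Polynomial.iterate_derivative_C_mul, ← Function.iterate_succ_apply,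
    Function.iterate_succ_apply', h, map_zero, mul_zero, add_zero]

variable [CharZero K]

theorem PowerSeries.derivative_rescale_exp (a : K) :
    d⁄dX K (rescale a (exp K)) = C a * rescale a (exp K) := by
  ext n
  simp only [coeff_derivative, coeff_C_mul, coeff_rescale, coeff_exp, pow_succ,
    Nat.factorial_succ]
  push_cast
  field_simp

theorem PowerSeries.derivative_sub_C_mul_sum_coe_mul_rescale_exp {ι : Type*} (s : Finset ι)
    (a : ι → K) (p : ι → K[X]) (b : K) :
    d⁄dX K (∑ i ∈ s, (p i : K⟦X⟧) * rescale (a i) (exp K)) -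
        C b * ∑ i ∈ s, (p i : K⟦X⟧) * rescale (a i) (exp K) =
      ∑ i ∈ s, (Polynomial.derivative (p i) + Polynomial.C (a i - b) * p i : K[X]) *
        rescale (a i) (exp K) := by
  simp only [map_sum, Finset.mul_sum, ← Finset.sum_sub_distrib]
  refine Finset.sum_congr rfl fun i _ => ?_
  rw [Derivation.leibniz, derivative_rescale_exp, derivative_coe, Polynomial.coe_add,
    Polynomial.coe_mul, Polynomial.coe_C, map_sub, smul_eq_mul]
  ring

theorem PowerSeries.eq_zero_of_coeff_sum_coe_mul_rescale_exp_eq_zero {ι : Type*} {s : Finset ι}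
    {a : ι → K} (ha : Set.InjOn a s) {p : ι → K[X]} {m : ι → ℕ}
    (hp : ∀ i ∈ s, Polynomial.derivative^[m i] (p i) = 0)
    (h : ∀ k < ∑ i ∈ s, m i,
      coeff k (∑ i ∈ s, (p i : K⟦X⟧) * rescale (a i) (exp K)) = 0) :
    ∀ i ∈ s, p i = 0 := by
  classical
  induction hN : ∑ i ∈ s, m i generalizing p m with
  | zero =>
    intro i hi
    simpa [Finset.sum_eq_zero_iff.mp hN i hi] using hp i hi
  | succ n ih =>
    obtain ⟨i₀, hi₀, hm₀⟩ :=
      Finset.exists_ne_zero_of_sum_ne_zero (s := s) (f := m) (by omega)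
    have hderiv := derivative_sub_C_mul_sum_coe_mul_rescale_exp s a p (a i₀)
    set q : ι → K[X] := fun i => Polynomial.derivative (p i) + Polynomial.C (a i - a i₀) * p i
    have hsum_update : ∑ i ∈ s, Function.update m i₀ (m i₀ - 1) i = n := by
      rw [Finset.sum_update_of_mem hi₀]
      have := Finset.sum_eq_add_sum_sdiff_singleton_of_mem hi₀ m
      omega
    have hq : ∀ i ∈ s, q i = 0 := by
      refine ih (fun i hi => ?_) (fun k hk => ?_) hsum_update
      · rcases eq_or_ne i i₀ with rfl | hne
        · simp only [Function.update_self, q, sub_self, map_zero, zero_mul, add_zero]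
          rw [← Function.iterate_succ_apply, Nat.succ_eq_add_one,
            Nat.sub_add_cancel (Nat.pos_of_ne_zero hm₀)]
          exact hp i hi
        · rw [Function.update_of_ne hne]
          exact Polynomial.iterate_derivative_derivative_add_C_mul_eq_zero (hp i hi) _
      · rw [hsum_update] at hk
        rw [← hderiv, map_sub, coeff_derivative, coeff_C_mul, h k (by omega),
          h (k + 1) (by omega)]
        ring
    have hp_ne : ∀ i ∈ s, i ≠ i₀ → p i = 0 := fun i hi hne =>
      Polynomial.eq_zero_of_derivative_eq_C_mul (c := a i₀ - a i)
        (sub_ne_zero.mpr (ha.ne hi₀ hi hne.symm))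
        (by rw [eq_neg_of_add_eq_zero_left (hq i hi), ← neg_mul, ← map_neg, neg_sub])
    have hp₀ : p i₀ = Polynomial.C ((p i₀).coeff 0) :=
      Polynomial.eq_C_of_derivative_eq_zero (by simpa [q] using hq i₀ hi₀)
    have hcoeff₀ :
        coeff 0 (∑ i ∈ s, (p i : K⟦X⟧) * rescale (a i) (exp K)) = (p i₀).coeff 0 := by
      rw [Finset.sum_eq_single_of_mem i₀ hi₀ fun i hi hne => by rw [hp_ne i hi hne,
        Polynomial.coe_zero, zero_mul], hp₀]
      simp
    intro i hi
    rcases eq_or_ne i i₀ with rfl | hne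
    · rw [hp₀, ← hcoeff₀, h 0 (by omega), map_zero]
    · exact hp_ne i hi hne

def pairsSumLE (d : ℕ) : Finset (ℕ × ℕ) :=
  (Finset.range (d + 1) ×ˢ Finset.range (d + 1)).filter fun p => p.1 + p.2 ≤ d

theorem sum_pairsSumLE {M : Type*} [AddCommMonoid M] (d : ℕ) (f : ℕ → ℕ → M) :
    ∑ p ∈ pairsSumLE d, f p.1 p.2 =
      ∑ j ∈ Finset.range (d + 1), ∑ i ∈ Finset.range (d + 1 - j), f i j := by
  rw [pairsSumLE, Finset.sum_filter, Finset.sum_product_right]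
  refine Finset.sum_congr rfl fun j hj => ?_
  rw [← Finset.sum_filter]
  refine Finset.sum_congr ?_ fun _ _ => rfl
  ext i
  simp only [Finset.mem_filter, Finset.mem_range] at hj ⊢
  omega

theorem sum_range_succ_sub_eq_choose_two (d : ℕ) :
    ∑ j ∈ Finset.range (d + 1), (d + 1 - j) = (d + 2).choose 2 := by
  rw [Nat.choose_two_right, ← Finset.sum_range_id, Finset.sum_range_succ' (fun i => i) (d + 1),
    add_zero, ← Finset.sum_range_reflect]
  refine Finset.sum_congr rfl fun j hj => ?_
  simp only [Finset.mem_range] at hj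
  omega

theorem card_pairsSumLE (d : ℕ) : (pairsSumLE d).card = (d + 2).choose 2 := by
  rw [Finset.card_eq_sum_ones, sum_pairsSumLE d fun _ _ => 1, ← sum_range_succ_sub_eq_choose_two]
  simp

theorem linearIndepOn_coeff_X_pow_mul_rescale_exp (d : ℕ) :
    LinearIndepOn K (fun p : ℕ × ℕ => fun k : Fin ((d + 2).choose 2) =>
      coeff k (X ^ p.1 * rescale (p.2 : K) (exp K))) (pairsSumLE d : Set (ℕ × ℕ)) := by
  rw [linearIndepOn_finset_iff]
  intro g hg
  set P : ℕ → K[X] := fun j => ∑ i ∈ Finset.range (d + 1 - j), Polynomial.monomial i (g (i, j))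
  have hsum : ∑ p ∈ pairsSumLE d, C (g p) * X ^ p.1 * rescale (p.2 : K) (exp K) =
      ∑ j ∈ Finset.range (d + 1), (P j : K⟦X⟧) * rescale (j : K) (exp K) := by
    rw [sum_pairsSumLE d fun i j => C (g (i, j)) * X ^ i * rescale (j : K) (exp K)]
    refine Finset.sum_congr rfl fun j _ => ?_
    rw [← Finset.sum_mul, ← Polynomial.coeToPowerSeries.ringHom_apply, map_sum]
    simp [monomial_eq_C_mul_X_pow]
  have hP : ∀ j ∈ Finset.range (d + 1), P j = 0 := by
    refine eq_zero_of_coeff_sum_coe_mul_rescale_exp_eq_zero (m := fun j => d + 1 - j)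
      Nat.cast_injective.injOn (fun j hj => Polynomial.iterate_derivative_eq_zero ?_)
      fun k hk => ?_
    · rw [Finset.mem_range] at hj
      refine (Polynomial.natDegree_sum_le_of_forall_le _ _ fun i hi => ?_).trans_lt
        (Nat.sub_one_lt (by omega) : d + 1 - j - 1 < _)
      exact (Polynomial.natDegree_monomial_le _).trans (by have := Finset.mem_range.mp hi; omega)
    · rw [sum_range_succ_sub_eq_choose_two] at hk
      have := congr_fun hg ⟨k, hk⟩
      rw [← hsum]
      simpa [map_sum, coeff_C_mul, mul_assoc] using this
  rintro ⟨i, j⟩ hij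
  have hij : i + j ≤ d := (Finset.mem_filter.mp hij).2
  have hi : i < d + 1 - j := by omega
  have := congr_arg (Polynomial.coeff · i) (hP j (Finset.mem_range.mpr (by omega)))
  simpa [P, Polynomial.finsetSum_coeff, Polynomial.coeff_monomial, hi] using this

theorem exists_coeff_sum_C_mul_X_pow_mul_rescale_exp_eq (d : ℕ)
    (t : Fin ((d + 2).choose 2) → K) :
    ∃ μ : ℕ → ℕ → K, ∀ k : Fin ((d + 2).choose 2),
      coeff k (∑ p ∈ pairsSumLE d, C (μ p.1 p.2) * X ^ p.1 * rescale (p.2 : K) (exp K)) =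
        t k := by
  set v : ℕ × ℕ → Fin ((d + 2).choose 2) → K :=
    fun p k => coeff k (X ^ p.1 * rescale (p.2 : K) (exp K))
  have hspan : Submodule.span K (v '' pairsSumLE d) = ⊤ := by
    rw [Set.image_eq_range]
    exact (linearIndepOn_coeff_X_pow_mul_rescale_exp d).linearIndependent
      |>.span_eq_top_of_card_eq_finrank' (by simp [card_pairsSumLE])
  obtain ⟨l, hl, hlt⟩ :=
    (Finsupp.mem_span_image_iff_linearCombination K).mp (hspan ▸ Submodule.mem_top (x := t))
  rw [Finsupp.linearCombination_apply_of_mem_supported K hl] at hlt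
  refine ⟨fun i j => l (i, j), fun k => ?_⟩
  rw [← hlt]
  simp [v, map_sum, coeff_C_mul, mul_assoc]

theorem stmt_11_general (d : ℕ) (B : ℕ) (hB : B = Nat.choose (d + 2) 2 - 1)
    -- e^{jt} as a power series over ℚ
    (E : ℕ → PowerSeries ℚ)
    (hE : ∀ j, E j = PowerSeries.mk fun n => (j : ℚ) ^ n / n.factorial) :
    ∃ μ : ℕ → ℕ → ℚ,
      (PowerSeries.coeff B
          (∑ p ∈ (Finset.range (d + 1) ×ˢ Finset.range (d + 1)).filter
              (fun p => p.1 + p.2 ≤ d),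
            PowerSeries.C (μ p.1 p.2) * PowerSeries.X ^ p.1 * E p.2) = 1) ∧
      ∀ l < B, PowerSeries.coeff l
          (∑ p ∈ (Finset.range (d + 1) ×ˢ Finset.range (d + 1)).filter
              (fun p => p.1 + p.2 ≤ d),
            PowerSeries.C (μ p.1 p.2) * PowerSeries.X ^ p.1 * E p.2) = 0 := by
  obtain rfl : E = fun j : ℕ => rescale (j : ℚ) (exp ℚ) := by
    funext j
    ext n
    simp [hE, coeff_rescale, coeff_exp, div_eq_mul_inv]
  have hB_lt : B < (d + 2).choose 2 := by
    have := Nat.choose_pos (n := d + 2) (k := 2) (by omega)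
    omega
  obtain ⟨μ, hμ⟩ :=
    exists_coeff_sum_C_mul_X_pow_mul_rescale_exp_eq d (Pi.single ⟨B, hB_lt⟩ (1 : ℚ))
  refine ⟨μ, (hμ ⟨B, hB_lt⟩).trans (Pi.single_eq_same _ _), fun l hl => ?_⟩
  exact (hμ ⟨l, hl.trans hB_lt⟩).trans (Pi.single_eq_of_ne (by simp [Fin.ext_iff, hl.ne]) _)

theorem stmt_11 (d : ℕ) (hd : 0 < d) (B : ℕ) (hB : B = Nat.choose (d + 2) 2 - 1)
    -- e^{jt} as a power series over ℚ
    (E : ℕ → PowerSeries ℚ)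
    (hE : ∀ j, E j = PowerSeries.mk fun n => (j : ℚ) ^ n / n.factorial) :
    ∃ μ : ℕ → ℕ → ℚ,
      (PowerSeries.coeff B
          (∑ p ∈ (Finset.range (d + 1) ×ˢ Finset.range (d + 1)).filter
              (fun p => p.1 + p.2 ≤ d),
            PowerSeries.C (μ p.1 p.2) * PowerSeries.X ^ p.1 * E p.2) = 1) ∧
      ∀ l < B, PowerSeries.coeff l
          (∑ p ∈ (Finset.range (d + 1) ×ˢ Finset.range (d + 1)).filter
              (fun p => p.1 + p.2 ≤ d),
            PowerSeries.C (μ p.1 p.2) * PowerSeries.X ^ p.1 * E p.2) = 0 :=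
  stmt_11_general d B hB E hE
end

section
/- Let P ∈ ℂ[x,y] be a polynomial such that P(x, 0) is not the zero polynomial. Then the system of differential equations x' = 1, y' = y, P(x, y) = 0 has no solution in ℂ[[t]]: there are no power series x(t), y(t) ∈ ℂ[[t]] with x'(t) = 1, y'(t) = y(t), and P(x(t), y(t)) = 0. -/
/-!
Every solution is `x = t + a`, `y = b eᵗ`. Since `eᵗ` is transcendental over `ℂ[t]`, the relation
`P(t + a, b eᵗ) = 0` forces `P(t + a, b Y) = 0` in `ℂ[t][Y]`; setting `Y = 0` and shifting `t` back
gives `P(t, 0) = 0`.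

Transcendence of `eᵗ`: applying `d/dt - n` to a relation `∑_{j ≤ n} qⱼ(t) e^{jt} = 0` gives the
relation with coefficients `qⱼ' + (j - n) qⱼ`, whose top coefficient `qₙ'` has smaller degree than `qₙ`.
Descend lexicographically on `(n, deg qₙ)`: once `qₙ` is constant the new relation is shorter, so all
`qⱼ' + (j - n) qⱼ` with `j < n` vanish, which for polynomials forces `qⱼ = 0`; then `qₙ e^{nt} = 0`.
-/

open Finset PowerSeries

namespace Polynomial

theorem eq_zero_of_derivative_add_smul_eq_zero {R : Type*} [CommRing R] [IsDomain R] {q : R[X]}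
    {c : R} (hc : c ≠ 0) (h : derivative q + c • q = 0) : q = 0 := by
  have h_top := congrArg (coeff · q.natDegree) h
  simp only [coeff_add, coeff_derivative, coeff_smul, smul_eq_mul, coeff_zero,
    coeff_eq_zero_of_natDegree_lt q.natDegree.lt_succ_self, zero_mul, zero_add] at h_top
  exact leadingCoeff_eq_zero.mp ((mul_eq_zero.mp h_top).resolve_left hc)

end Polynomial

namespace PowerSeries

section Solutions

variable {R : Type*} [CommRing R] [IsAddTorsionFree R]

theorem eq_X_add_C_of_derivative_eq_one {x : R⟦X⟧} (h : d⁄dX R x = 1) :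
    x = X + C (constantCoeff x) :=
  derivative.ext (by simp [h]) (by simp)

theorem eq_of_derivative_eq_self {f g : R⟦X⟧} (hf : d⁄dX R f = f) (hg : d⁄dX R g = g)
    (h₀ : constantCoeff f = constantCoeff g) : f = g := by
  ext n
  induction n with
  | zero => simpa using h₀
  | succ n ih =>
    have hf' := congrArg (coeff n) hf
    have hg' := congrArg (coeff n) hg
    rw [coeff_derivative, ← Nat.cast_succ, mul_comm, ← nsmul_eq_mul] at hf' hg'
    exact (smul_right_inj n.succ_ne_zero).mp (by rw [hf', hg', ih])

theorem eq_C_mul_exp_of_derivative_eq_self [Algebra ℚ R] {y : R⟦X⟧} (h : d⁄dX R y = y) :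
    y = C (constantCoeff y) * exp R :=
  eq_of_derivative_eq_self h (by simp [derivative_exp]) (by simp)

end Solutions

section ExpPolynomials

variable {A : Type*} [CommRing A] [Algebra ℚ A]

theorem derivative_coe_mul_exp_pow (q : Polynomial A) (j : ℕ) :
    d⁄dX A (q * exp A ^ j) = ↑(Polynomial.derivative q + (j : A) • q) * exp A ^ j := by
  rw [Derivation.leibniz, derivative_pow, derivative_exp, derivative_coe, Polynomial.smul_eq_C_mul,
    Polynomial.coe_add, Polynomial.coe_mul, Polynomial.coe_C, map_natCast, smul_eq_mul, smul_eq_mul]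
  cases j
  · simp
  · rw [Nat.add_sub_cancel, pow_succ]
    ring

theorem derivative_sub_C_mul_sum_coe_mul_exp_pow (q : ℕ → Polynomial A) (c : A) (s : Finset ℕ) :
    d⁄dX A (∑ j ∈ s, ↑(q j) * exp A ^ j) - C c * ∑ j ∈ s, ↑(q j) * exp A ^ j =
      ∑ j ∈ s, ↑(Polynomial.derivative (q j) + ((j : A) - c) • q j) * exp A ^ j := by
  simp only [map_sum, mul_sum, ← sum_sub_distrib, derivative_coe_mul_exp_pow, sub_smul,
    Polynomial.coe_add, Polynomial.coe_sub, Polynomial.smul_eq_C_mul, Polynomial.coe_mul,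
    Polynomial.coe_C]
  refine sum_congr rfl fun j _ => ?_
  ring

end ExpPolynomials

variable {K : Type*} [Field K] [CharZero K]

theorem eq_zero_of_sum_coe_mul_exp_pow_eq_zero (n : ℕ) (q : ℕ → Polynomial K)
    (h : ∑ j ∈ range (n + 1), (q j : K⟦X⟧) * exp K ^ j = 0) : ∀ j ≤ n, q j = 0 := by
  set r : ℕ → Polynomial K := fun j => Polynomial.derivative (q j) + ((j : K) - n) • q j
  have hr : ∑ j ∈ range (n + 1), (r j : K⟦X⟧) * exp K ^ j = 0 := by
    rw [← derivative_sub_C_mul_sum_coe_mul_exp_pow, h, map_zero, mul_zero, sub_zero]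
  have hrn : r n = Polynomial.derivative (q n) := by simp [r]
  by_cases hd : Polynomial.derivative (q n) = 0
  · have h_low : ∀ i < n, q i = 0 := by
      intro i hi
      have hr' : ∑ j ∈ range (n - 1 + 1), (r j : K⟦X⟧) * exp K ^ j = 0 := by
        rw [Nat.sub_add_cancel (by omega)]
        simpa [sum_range_succ, hrn, hd] using hr
      refine Polynomial.eq_zero_of_derivative_add_smul_eq_zero ?_
        (eq_zero_of_sum_coe_mul_exp_pow_eq_zero (n - 1) r hr' i (by omega))
      exact sub_ne_zero.mpr (by exact_mod_cast hi.ne)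
    have h_top : (q n : K⟦X⟧) * exp K ^ n = 0 := by
      rwa [sum_range_succ, sum_eq_zero fun i hi => by rw [h_low i (mem_range.mp hi)]; simp,
        zero_add] at h
    intro j hj
    rcases hj.lt_or_eq with hj | rfl
    · exact h_low j hj
    · exact Polynomial.coe_eq_zero_iff.mp (((isUnit_exp K).pow j).mul_left_eq_zero.mp h_top)
  · exact absurd (hrn ▸ eq_zero_of_sum_coe_mul_exp_pow_eq_zero n r hr n le_rfl) hd
termination_by (n, (q n).natDegree)
decreasing_by
  · exact Prod.Lex.left _ _ (by omega)
  · refine Prod.Lex.right _ ?_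
    rw [sub_self, zero_smul, add_zero]
    exact Polynomial.natDegree_derivative_lt fun h0 => hd (Polynomial.derivative_of_natDegree_zero h0)

theorem transcendental_exp : Transcendental (Polynomial K) (exp K) := by
  refine transcendental_iff.mpr fun Q hQ => Polynomial.ext fun j => ?_
  rw [Polynomial.aeval_eq_sum_range] at hQ
  rcases le_or_gt j Q.natDegree with hj | hj
  · exact eq_zero_of_sum_coe_mul_exp_pow_eq_zero Q.natDegree Q.coeff hQ j hj
  · exact Polynomial.coeff_eq_zero_of_natDegree_lt hj

end PowerSeries

theorem stmt_12 (P : MvPolynomial (Fin 2) ℂ)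
    (hP : MvPolynomial.aeval ![Polynomial.X, (0 : Polynomial ℂ)] P ≠ 0) :
    ¬ ∃ x y : PowerSeries ℂ,
        PowerSeries.derivative ℂ x = 1 ∧
        PowerSeries.derivative ℂ y = y ∧
        MvPolynomial.aeval ![x, y] P = 0 := by
  rintro ⟨x, y, hx, hy, hxy⟩
  obtain ⟨a, rfl⟩ : ∃ a, x = X + C a := ⟨_, eq_X_add_C_of_derivative_eq_one hx⟩
  obtain ⟨b, rfl⟩ : ∃ b, y = C b * exp ℂ := ⟨_, eq_C_mul_exp_of_derivative_eq_self hy⟩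
  let σ : MvPolynomial (Fin 2) ℂ →ₐ[ℂ] Polynomial (Polynomial ℂ) :=
    MvPolynomial.aeval ![.C (.X + .C a), .C (.C b) * .X]
  have h_eval : ((Polynomial.aeval (exp ℂ)).restrictScalars ℂ).comp σ =
      MvPolynomial.aeval ![X + C a, C b * exp ℂ] := by
    rw [MvPolynomial.comp_aeval]
    congr 1
    funext i
    fin_cases i <;> simp [algebraMap_apply']
  have hσP : σ P = 0 := transcendental_iff.mp transcendental_exp _ (by simpa [← h_eval] using hxy)
  have h_specialize : ((Polynomial.aeval (Polynomial.X - Polynomial.C a)).comp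
      ((Polynomial.aeval (0 : Polynomial ℂ)).restrictScalars ℂ)).comp σ =
      MvPolynomial.aeval ![Polynomial.X, (0 : Polynomial ℂ)] := by
    rw [MvPolynomial.comp_aeval]
    congr 1
    funext i
    fin_cases i <;> simp
  exact hP (by rw [← h_specialize, AlgHom.comp_apply, hσP, map_zero])
end

section
/- For integers d ≥ 2, n ≥ 1, and 0 ≤ m ≤ n − 1, we have d^n · Σ_{i=0}^m Σ_{j=0}^i d^{(n−i)(2^{j+1}−2)} ≤ d^{(n−m+1)·2^{m+1}}. -/
/-!
The exponent `(n - i) * (2 ^ (j + 1) - 2)` grows with `j`, and for `i < n` also with `i`, so each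
of the at most `(m + 1) ^ 2` terms is at most `d ^ F` with `F = (n - m) * (2 ^ (m + 1) - 2)`.
Since `(m + 1) ^ 2 ≤ 2 ^ (m + 2) ≤ d ^ (m + 2)`, it remains to check
`n + (m + 2) + F ≤ (n - m + 1) * 2 ^ (m + 1)`, which reduces to `2 * m + 2 ≤ 2 ^ (m + 1)`.
-/

open Finset

theorem succ_sq_le_two_pow_add_two (m : ℕ) : (m + 1) ^ 2 ≤ 2 ^ (m + 2) := by
  induction m with
  | zero => norm_num
  | succ k ih =>
    have h4 : 2 ^ (k + 2) = 4 * 2 ^ k := by ring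
    rw [pow_succ 2 (k + 2)]
    nlinarith [k.lt_two_pow_self]

theorem monotoneOn_sub_mul_two_pow_sub_two (n : ℕ) :
    MonotoneOn (fun i ↦ (n - i) * (2 ^ (i + 1) - 2)) (Set.Iio n) := by
  refine monotoneOn_of_le_add_one Set.ordConnected_Iio fun i _ _ hi ↦ ?_
  obtain ⟨k, hk⟩ : ∃ k, n - (i + 1) = k + 1 := ⟨n - i - 2, by simp at hi; omega⟩
  have hn : n - i = k + 2 := by omega
  obtain ⟨Q, hQ⟩ : ∃ Q, 2 ^ (i + 1) = Q + 2 :=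
    ⟨2 ^ (i + 1) - 2, by have := i.lt_two_pow_self; rw [pow_succ]; omega⟩
  have hQ' : 2 ^ (i + 1 + 1) - 2 = 2 * Q + 2 := by rw [pow_succ, hQ]; omega
  simp only [hk, hn, hQ, hQ', Nat.add_sub_cancel]
  nlinarith

theorem add_add_sub_mul_two_pow_sub_two_le {n m : ℕ} (hmn : m < n) :
    n + (m + 2) + (n - m) * (2 ^ (m + 1) - 2) ≤ (n - m + 1) * 2 ^ (m + 1) := by
  have hP : 2 * m + 2 ≤ 2 ^ (m + 1) := by have := m.lt_two_pow_self; rw [pow_succ]; omega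
  obtain ⟨Q, hQ⟩ : ∃ Q, 2 ^ (m + 1) = Q + 2 := ⟨2 ^ (m + 1) - 2, by omega⟩
  have hsplit : (n - m + 1) * (Q + 2) = (n - m) * Q + 2 * (n - m) + (Q + 2) := by ring
  rw [hQ, Nat.add_sub_cancel, hsplit]
  omega

theorem sum_range_sum_range_succ_le_sq_mul {m B : ℕ} (f : ℕ → ℕ → ℕ)
    (hf : ∀ i ≤ m, ∀ j ≤ i, f i j ≤ B) :
    ∑ i ∈ range (m + 1), ∑ j ∈ range (i + 1), f i j ≤ (m + 1) ^ 2 * B := by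
  calc _ ≤ ∑ i ∈ range (m + 1), (m + 1) * B := by
        refine sum_le_sum fun i hi ↦ ?_
        rw [mem_range, Nat.lt_succ_iff] at hi
        refine (sum_le_card_nsmul _ _ _ fun j hj ↦ hf i hi j ?_).trans ?_
        · exact Nat.lt_succ_iff.1 (mem_range.1 hj)
        · rw [card_range, smul_eq_mul]
          gcongr
    _ = (m + 1) ^ 2 * B := by simp [sq, mul_assoc]

theorem stmt_17 (d n m : ℕ) (hd : 2 ≤ d) (hn : 1 ≤ n) (hm : m ≤ n - 1) :
    d ^ n * ∑ i ∈ Finset.range (m + 1), ∑ j ∈ Finset.range (i + 1),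
      d ^ ((n - i) * (2 ^ (j + 1) - 2)) ≤ d ^ ((n - m + 1) * 2 ^ (m + 1)) := by
  have hmn : m < n := by omega
  set F := (n - m) * (2 ^ (m + 1) - 2)
  have hterm : ∀ i ≤ m, ∀ j ≤ i, d ^ ((n - i) * (2 ^ (j + 1) - 2)) ≤ d ^ F := by
    intro i hi j hj
    refine Nat.pow_le_pow_right (by omega) ?_
    calc (n - i) * (2 ^ (j + 1) - 2) ≤ (n - i) * (2 ^ (i + 1) - 2) := by gcongr; omega
      _ ≤ F := monotoneOn_sub_mul_two_pow_sub_two n (Set.mem_Iio.2 (by omega)) hmn hi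
  have hcount : (m + 1) ^ 2 ≤ d ^ (m + 2) :=
    (succ_sq_le_two_pow_add_two m).trans (Nat.pow_le_pow_left hd _)
  calc _ ≤ d ^ n * ((m + 1) ^ 2 * d ^ F) := by
        gcongr
        exact sum_range_sum_range_succ_le_sq_mul _ hterm
    _ ≤ d ^ n * (d ^ (m + 2) * d ^ F) := by gcongr
    _ = d ^ (n + (m + 2) + F) := by rw [pow_add, pow_add]; ring
    _ ≤ _ := Nat.pow_le_pow_right (by omega) (add_add_sub_mul_two_pow_sub_two_le hmn)
end
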